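/- Let L be a symmetric positive semidefinite matrix of rank r, let C ⊆ {1,...,K} index a set of r linearly independent columns of L, let C be the K×r matrix of those columns and W = L_{C,C} the corresponding r×r principal submatrix. Then W is invertible and the Nyström extension C W^{-1} C^T equals L exactly. -/

import Mathlib

/-!
The `r` independent columns indexed by `C` span the column space of `L`, so `L = C X` for some
`X`. Restricting to the rows in `C` and using symmetry gives `Cᵀ = W X`, hence `C = Xᵀ W`: if
`W v = 0` then `C v = 0`, so `v = 0` and `W` is invertible. Finally
`L = C X = C W⁻¹ (W X) = C W⁻¹ Cᵀ`.
-/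

open Matrix

namespace Matrix

variable {R : Type*} [Field R] {m n ι : Type*} [Fintype ι]

theorem exists_submatrix_cols_mul_eq_of_card_eq_rank [Fintype m] [Fintype n] {A : Matrix m n R}
    {f : ι → n} (hf : LinearIndependent R (A.col ∘ f)) (hcard : Fintype.card ι = A.rank) :
    ∃ X : Matrix ι n R, A.submatrix id f * X = A := by
  have hspan : Submodule.span R (Set.range (A.col ∘ f)) = Submodule.span R (Set.range A.col) := by
    refine Submodule.eq_of_le_of_finrank_eq
      (Submodule.span_mono (Set.range_comp_subset_range f A.col)) ?_
    rw [← rank_eq_finrank_span_cols, ← hcard, linearIndependent_iff_card_eq_finrank_span.mp hf,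
      Set.finrank]
  have hmem (j : n) : ∃ c : ι → R, ∑ i, c i • A.col (f i) = A.col j :=
    (Submodule.mem_span_range_iff_exists_fun R).mp (hspan ▸ Submodule.subset_span ⟨j, rfl⟩)
  choose X hX using hmem
  refine ⟨of fun i j => X j i, ext fun k j => ?_⟩
  simpa [mul_apply, mul_comm] using congrFun (hX j) k

variable {A : Matrix n n R} {f : ι → n}

theorem IsSymm.transpose_submatrix_cols_eq {X : Matrix ι n R} (hA : A.IsSymm)
    (hX : A.submatrix id f * X = A) : (A.submatrix id f)ᵀ = A.submatrix f f * X := by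
  conv_lhs => rw [transpose_submatrix, hA.eq, ← hX]
  rw [submatrix_mul _ _ _ id _ Function.bijective_id, submatrix_submatrix]
  rfl

theorem IsSymm.isUnit_det_submatrix [DecidableEq ι] {X : Matrix ι n R} (hA : A.IsSymm)
    (hf : LinearIndependent R (A.col ∘ f)) (hX : A.submatrix id f * X = A) :
    IsUnit (A.submatrix f f).det := by
  have hcols : A.submatrix id f = Xᵀ * A.submatrix f f := by
    rw [← (hA.submatrix f).eq, ← transpose_mul, ← hA.transpose_submatrix_cols_eq hX,
      transpose_transpose]
  rw [← isUnit_iff_isUnit_det, ← mulVec_injective_iff_isUnit]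
  intro v w hvw
  refine mulVec_injective_iff (M := A.submatrix id f) |>.mpr hf ?_
  rw [hcols, ← mulVec_mulVec, ← mulVec_mulVec, hvw]

theorem IsSymm.submatrix_mul_inv_mul_transpose_eq [DecidableEq ι] {X : Matrix ι n R}
    (hA : A.IsSymm) (hf : LinearIndependent R (A.col ∘ f)) (hX : A.submatrix id f * X = A) :
    A.submatrix id f * (A.submatrix f f)⁻¹ * (A.submatrix id f)ᵀ = A := by
  rw [hA.transpose_submatrix_cols_eq hX, Matrix.mul_assoc, ← Matrix.mul_assoc _ _ X,
    nonsing_inv_mul _ (hA.isUnit_det_submatrix hf hX), Matrix.one_mul, hX]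

end Matrix

/-- If L is SPSD of rank r and C indexes r linearly independent columns of L,
then W = L_{C,C} is invertible and the Nyström extension C W⁻¹ Cᵀ equals L exactly. -/
theorem stmt_2 (K r : ℕ) (L : Matrix (Fin K) (Fin K) ℝ) (hL : L.PosSemidef)
    (hrank : L.rank = r) (C : Finset (Fin K)) (hcard : C.card = r)
    (hind : LinearIndependent ℝ (fun c : C => Lᵀ (c : Fin K))) :
    IsUnit (L.submatrix (Subtype.val : C → Fin K) Subtype.val).det ∧
      L.submatrix id (Subtype.val : C → Fin K) *
          (L.submatrix (Subtype.val : C → Fin K) Subtype.val)⁻¹ *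
          (L.submatrix id (Subtype.val : C → Fin K))ᵀ = L := by
  have hsymm : L.IsSymm := isHermitian_iff_isSymm.mp hL.isHermitian
  obtain ⟨X, hX⟩ := exists_submatrix_cols_mul_eq_of_card_eq_rank (f := Subtype.val) hind
    (by rw [Fintype.card_coe, hcard, hrank])
  exact ⟨hsymm.isUnit_det_submatrix hind hX, hsymm.submatrix_mul_inv_mul_transpose_eq hind hX⟩
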